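/- arXiv:2407.13725 — 5 statements merged into one kernel-verified Lean document; each statement's English description precedes it below -/
import Mathlib

section
/- Exponential mechanism satisfies Geo-Ind (Case 1): let ε > 0, let d be a metric on a set of locations, and let y_k ≥ 0. If z_i = y_k · exp(−ε · d(v_i, v_k)/2) and z_j = y_k · exp(−ε · d(v_j, v_k)/2), then z_i − exp(ε · d(v_i, v_j)) · z_j ≤ 0. -/
/-- Exponential mechanism satisfies Geo-Ind (Case 1). -/
theorem stmt2 {V : Type*} [MetricSpace V] (ε yk : ℝ) (hε : 0 < ε) (hy : 0 ≤ yk)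
    (vi vj vk : V) :
    yk * Real.exp (-(ε * dist vi vk) / 2) -
      Real.exp (ε * dist vi vj) * (yk * Real.exp (-(ε * dist vj vk) / 2)) ≤ 0 := by
  have htri : dist vj vk ≤ dist vj vi + dist vi vk := dist_triangle _ _ _
  have hij : (0:ℝ) ≤ dist vi vj := dist_nonneg
  have h : Real.exp (-(ε * dist vi vk) / 2) ≤
      Real.exp (ε * dist vi vj) * Real.exp (-(ε * dist vj vk) / 2) := by
    rw [← Real.exp_add, Real.exp_le_exp]
    rw [dist_comm vj vi] at htri
    nlinarith
  nlinarith [Real.exp_pos (-(ε * dist vi vk) / 2)]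
end

section
/- Exponential mechanism with truncation satisfies Geo-Ind (Case 2): let ε > 0, let d be a metric, y_k ≥ 0, and r_obf > 0. Suppose d(v_i, v_k) ≤ r_obf < d(v_j, v_k), and set z_i = y_k · exp(−ε · d(v_i, v_k)/2) and z_j = y_k · exp(−ε · r_obf/2). Then z_i − exp(ε · d(v_i, v_j)) · z_j ≤ 0. -/
/-- Exponential mechanism with truncation satisfies Geo-Ind (Case 2). -/
theorem stmt3 {V : Type*} [MetricSpace V] (ε yk robf : ℝ) (hε : 0 < ε) (hy : 0 ≤ yk)
    (hr : 0 < robf) (vi vj vk : V)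
    (hik : dist vi vk ≤ robf) (hjk : robf < dist vj vk) :
    yk * Real.exp (-(ε * dist vi vk) / 2) -
      Real.exp (ε * dist vi vj) * (yk * Real.exp (-(ε * robf) / 2)) ≤ 0 := by
  have htri : dist vj vk ≤ dist vj vi + dist vi vk := dist_triangle _ _ _
  have h1 : robf - dist vi vk ≤ dist vi vj := by
    rw [dist_comm vi vj]; linarith
  have h2 : -(ε * dist vi vk) / 2 ≤ ε * dist vi vj + -(ε * robf) / 2 := by
    nlinarith [dist_nonneg (x := vi) (y := vj), mul_le_mul_of_nonneg_left h1 hε.le]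
  have := Real.exp_le_exp.mpr h2
  rw [Real.exp_add] at this
  nlinarith [Real.exp_pos (-(ε * dist vi vk) / 2), Real.exp_pos (ε * dist vi vj),
    Real.exp_pos (-(ε * robf) / 2), mul_le_mul_of_nonneg_left this hy]
end

section
/- Combined privacy guarantee (Theorem: privacy guarantee): let ε > 0, let d be a metric on locations, y_k ≥ 0, r_obf > 0. For a location v, define z(v) = y_k · exp(−ε · d(v, v_k)/2) if d(v, v_k) ≤ r_obf, and z(v) = y_k · exp(−ε · r_obf/2) otherwise. Then for any two locations v_i, v_j, z(v_i) − exp(ε · d(v_i, v_j)) · z(v_j) ≤ 0. -/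
/-- Combined privacy guarantee: the truncated exponential obfuscation mechanism
satisfies the Geo-Ind constraint between any pair of real locations. -/
theorem stmt5 {V : Type*} [MetricSpace V] (ε yk robf : ℝ) (hε : 0 < ε) (hy : 0 ≤ yk)
    (hr : 0 < robf) (vk : V) (z : V → ℝ)
    (hz : ∀ v, z v = if dist v vk ≤ robf then yk * Real.exp (-(ε * dist v vk) / 2)
        else yk * Real.exp (-(ε * robf) / 2))
    (vi vj : V) :
    z vi - Real.exp (ε * dist vi vj) * z vj ≤ 0 := by
  have key : ∀ v, z v = yk * Real.exp (-(ε * min (dist v vk) robf) / 2) := by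
    intro v
    rw [hz v]
    split_ifs with h
    · rw [min_eq_left h]
    · rw [min_eq_right (le_of_not_ge h)]
  rw [key, key]
  have hexp : Real.exp (ε * dist vi vj) * (yk * Real.exp (-(ε * min (dist vj vk) robf) / 2))
      = yk * Real.exp (ε * dist vi vj + -(ε * min (dist vj vk) robf) / 2) := by
    rw [Real.exp_add]; ring
  rw [hexp]
  have hm : min (dist vj vk) robf - dist vi vj ≤ min (dist vi vk) robf := by
    have ht : dist vj vk ≤ dist vj vi + dist vi vk := dist_triangle _ _ _
    rw [dist_comm vj vi] at ht
    rcases le_total (dist vi vk) robf with h | h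
    · rw [min_eq_left h]
      calc min (dist vj vk) robf - dist vi vj ≤ dist vj vk - dist vi vj :=
            by linarith [min_le_left (dist vj vk) robf]
        _ ≤ dist vi vk := by linarith
    · rw [min_eq_right h]
      linarith [min_le_right (dist vj vk) robf, dist_nonneg (x := vi) (y := vj)]
  have harg : -(ε * min (dist vi vk) robf) / 2 ≤ ε * dist vi vj + -(ε * min (dist vj vk) robf) / 2 := by
    nlinarith [hε.le, dist_nonneg (x := vi) (y := vj), mul_le_mul_of_nonneg_left hm hε.le]
  have := Real.exp_le_exp.mpr harg
  nlinarith [Real.exp_pos (-(ε * min (dist vi vk) robf) / 2)]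
end

section
/- Lower bound on estimated cost coefficient (Lemma: lower bound): let d be a metric, let {q_j}_{j=1}^Q be nonnegative weights summing to 1, and let p_i ≥ 0. Define c = p_i · Σ_j q_j · |d(v_i, v_j) − d(v_k, v_j)| and c̃ = p_i · (β − d(v_i, v̂_i) − d(v_k, v̂_k)) where β = Σ_j q_j · |d(v̂_i, v_j) − d(v̂_k, v_j)|. Then c̃ ≤ c. -/
/-- Lower bound on the estimated cost coefficient: the estimate
`c̃ = p_i (β − d(v_i, v̂_i) − d(v_k, v̂_k))` is at most the true cost `c`. -/
theorem stmt7 {V : Type*} [MetricSpace V] (Q : ℕ) (q : Fin Q → ℝ)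
    (hq : ∀ j, 0 ≤ q j) (hq1 : ∑ j, q j = 1) (pi : ℝ) (hpi : 0 ≤ pi)
    (vi vk hvi hvk : V) (t : Fin Q → V) :
    pi * ((∑ j, q j * |dist hvi (t j) - dist hvk (t j)|) - dist vi hvi - dist vk hvk) ≤
      pi * ∑ j, q j * |dist vi (t j) - dist vk (t j)| := by
  apply mul_le_mul_of_nonneg_left _ hpi
  have key : ∀ j, q j * |dist hvi (t j) - dist hvk (t j)| ≤
      q j * (|dist vi (t j) - dist vk (t j)| + dist vi hvi + dist vk hvk) := by
    intro j
    apply mul_le_mul_of_nonneg_left _ (hq j)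
    have h1 : |dist hvi (t j) - dist vi (t j)| ≤ dist vi hvi := by
      rw [dist_comm vi hvi]; exact abs_dist_sub_le _ _ _
    have h2 : |dist vk (t j) - dist hvk (t j)| ≤ dist vk hvk := abs_dist_sub_le _ _ _
    calc |dist hvi (t j) - dist hvk (t j)|
        = |(dist vi (t j) - dist vk (t j)) + (dist hvi (t j) - dist vi (t j))
            + (dist vk (t j) - dist hvk (t j))| := by ring_nf
      _ ≤ |dist vi (t j) - dist vk (t j)| + |dist hvi (t j) - dist vi (t j)|
            + |dist vk (t j) - dist hvk (t j)| := abs_add_three _ _ _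
      _ ≤ |dist vi (t j) - dist vk (t j)| + dist vi hvi + dist vk hvk := by
          gcongr
  have := Finset.sum_le_sum (s := Finset.univ) (fun j _ => key j)
  simp only [mul_add, Finset.sum_add_distrib, ← Finset.sum_mul, hq1, one_mul] at this
  linarith
end

section
/- Counting identity for guaranteed constraints across M users (Proposition, part 2): under the same setup with M users having pairwise disjoint LR sets N_1, ..., N_M, the total number of Geo-Ind constraints is Σ_n |N_n| · (Σ_n |N_n| − 1) · |V|, of which at least 2·Σ_{n<m} Σ_{(v_i,v_j) ∈ N_n × N_m} |A_i ∩ A_j| + |V| · Σ_n (|N_n|² − |N_n|) are guaranteed to be satisfied; hence the violation ratio is at most 1 minus the ratio of these two quantities. -/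
private lemma swapSum {M' : Type*} [Fintype M'] [LinearOrder M'] (u : M' → M' → ℝ) :
    ∑ n, ∑ m ∈ Finset.univ.filter (fun m => m < n), u n m
    = ∑ n, ∑ m ∈ Finset.univ.filter (fun m => n < m), u m n := by
  simp_rw [Finset.sum_filter]
  exact Finset.sum_comm

private lemma sumIteNe {α : Type*} [DecidableEq α] (s : Finset α) (v : ℝ) :
    ∑ i ∈ s, ∑ j ∈ s, (if i ≠ j then v else 0) = ((s.card : ℝ)^2 - s.card) * v := by
  have h : ∀ i j : α, (if i ≠ j then v else 0) = v - (if i = j then v else 0) := by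
    intro i j; by_cases h : i = j <;> simp [h]
  simp_rw [h, Finset.sum_sub_distrib, Finset.sum_const, Finset.sum_ite_eq]
  simp [Finset.sum_ite_mem]
  ring

/-- Counting identity for guaranteed constraints across `M` users: the Geo-Ind
violation ratio over all `Σ_n |N_n| (Σ_n |N_n| − 1) |V|` constraints is at most
one minus the ratio of guaranteed-satisfied constraints. -/
theorem stmt13 {L W : Type*} [DecidableEq L] [DecidableEq W] (M : ℕ)
    (N : Fin M → Finset L) (hdisj : ∀ n m, n ≠ m → Disjoint (N n) (N m))
    (V : Finset W) (A : L → Finset W) (hA : ∀ i, A i ⊆ V)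
    (Viol : L → L → W → Prop) [∀ i j k, Decidable (Viol i j k)]
    (hwithin : ∀ n, ∀ i ∈ N n, ∀ j ∈ N n, ∀ k ∈ V, ¬ Viol i j k)
    (hcross : ∀ n m, n ≠ m → ∀ i ∈ N n, ∀ j ∈ N m, ∀ k ∈ A i ∩ A j, ¬ Viol i j k)
    (hV : 0 < V.card) (htot : 1 < ∑ n, (N n).card) :
    ((((Finset.univ.biUnion N) ×ˢ (Finset.univ.biUnion N) ×ˢ V).filter
        (fun t => t.1 ≠ t.2.1 ∧ Viol t.1 t.2.1 t.2.2)).card : ℝ) /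
      ((∑ n, ((N n).card : ℝ)) * ((∑ n, ((N n).card : ℝ)) - 1) * V.card) ≤
    1 - (2 * ∑ n, ∑ m ∈ Finset.univ.filter (fun m => n < m),
            ∑ i ∈ N n, ∑ j ∈ N m, ((A i ∩ A j).card : ℝ) +
          (V.card : ℝ) * ∑ n, (((N n).card : ℝ) ^ 2 - (N n).card)) /
      ((∑ n, ((N n).card : ℝ)) * ((∑ n, ((N n).card : ℝ)) - 1) * V.card) := by
  classical
  set S : Finset L := Finset.univ.biUnion N with hSdef
  set T : Finset (L × L × W) := S ×ˢ S ×ˢ V with hTdef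
  set v : ℝ := (V.card : ℝ) with hvdef
  set s : ℝ := ∑ n, ((N n).card : ℝ) with hsdef
  have hv : 0 < v := by rw [hvdef]; exact_mod_cast hV
  have hs : (2:ℝ) ≤ s := by
    have : 2 ≤ ∑ n, (N n).card := htot
    have := Nat.cast_le (α := ℝ) |>.mpr this
    push_cast at this
    simpa [hsdef] using this
  have hD : 0 < s * (s - 1) * v :=
    mul_pos (mul_pos (by linarith : (0:ℝ) < s) (by linarith : (0:ℝ) < s - 1)) hv
  -- the good set
  set a : ℝ := ((T.filter (fun t => t.1 ≠ t.2.1 ∧ Viol t.1 t.2.1 t.2.2)).card : ℝ) with hadef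
  set Gd : ℝ := ((T.filter (fun t => t.1 ≠ t.2.1 ∧ ¬ Viol t.1 t.2.1 t.2.2)).card : ℝ) with hGdef
  set g : ℝ := 2 * ∑ n, ∑ m ∈ Finset.univ.filter (fun m => n < m),
            ∑ i ∈ N n, ∑ j ∈ N m, ((A i ∩ A j).card : ℝ) +
          v * ∑ n, (((N n).card : ℝ) ^ 2 - (N n).card) with hgdef
  have hdisjU : ((Finset.univ : Finset (Fin M)) : Set (Fin M)).PairwiseDisjoint N := by
    intro n _ m _ h; exact hdisj n m h
  have hScard : (S.card : ℝ) = s := by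
    rw [hSdef, Finset.card_biUnion (fun n _ m _ h => hdisj n m h)]
    push_cast [hsdef]; rfl
  -- cast of filter card as sums of indicators
  have hcard : ∀ (p : L → L → W → Prop) [∀ i j k, Decidable (p i j k)],
      ((T.filter (fun t => p t.1 t.2.1 t.2.2)).card : ℝ)
      = ∑ i ∈ S, ∑ j ∈ S, ∑ k ∈ V, (if p i j k then (1:ℝ) else 0) := by
    intro p _
    rw [Finset.card_filter]
    rw [hTdef, Finset.sum_product]
    simp_rw [Finset.sum_product]
    push_cast
    rfl
  -- Step A : a + Gd = s (s-1) v
  have hA1 : a + Gd = s * (s - 1) * v := by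
    have h1 : a + Gd = ((T.filter (fun t => t.1 ≠ t.2.1)).card : ℝ) := by
      rw [hadef, hGdef]
      norm_cast
      have e1 : T.filter (fun t => t.1 ≠ t.2.1 ∧ Viol t.1 t.2.1 t.2.2)
          = (T.filter (fun t => t.1 ≠ t.2.1)).filter (fun t => Viol t.1 t.2.1 t.2.2) := by
        rw [Finset.filter_filter]
      have e2 : T.filter (fun t => t.1 ≠ t.2.1 ∧ ¬ Viol t.1 t.2.1 t.2.2)
          = (T.filter (fun t => t.1 ≠ t.2.1)).filter (fun t => ¬ Viol t.1 t.2.1 t.2.2) := by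
        rw [Finset.filter_filter]
      rw [e1, e2]
      exact Finset.card_filter_add_card_filter_not _
    rw [h1]
    have := hcard (fun i j _ => i ≠ j)
    rw [this]
    have hk : ∀ i j : L, ∑ k ∈ V, (if i ≠ j then (1:ℝ) else 0)
        = (if i ≠ j then v else 0) := by
      intro i j; by_cases h : i = j <;> simp [h, hvdef]
    simp_rw [hk]
    rw [sumIteNe S v, hScard]
    ring
  -- Step B : g ≤ Gd
  have hB : g ≤ Gd := by
    set q : L → L → W → ℝ := fun i j k => if (i ≠ j ∧ ¬ Viol i j k) then (1:ℝ) else 0 with hqdef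
    set t : Fin M → Fin M → ℝ := fun n m => ∑ i ∈ N n, ∑ j ∈ N m, ∑ k ∈ V, q i j k with htdef
    set u : Fin M → Fin M → ℝ := fun n m => ∑ i ∈ N n, ∑ j ∈ N m, ((A i ∩ A j).card : ℝ)
      with hudef
    have hGd : Gd = ∑ n, ∑ m, t n m := by
      rw [hGdef]
      rw [hcard (fun i j k => i ≠ j ∧ ¬ Viol i j k)]
      rw [hSdef, Finset.sum_biUnion hdisjU]
      refine Finset.sum_congr rfl fun n _ => ?_
      have hj : ∀ i : L, ∑ j ∈ Finset.univ.biUnion N, ∑ k ∈ V, q i j k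
          = ∑ m, ∑ j ∈ N m, ∑ k ∈ V, q i j k := fun i => Finset.sum_biUnion hdisjU
      rw [Finset.sum_congr rfl fun i _ => hj i]
      exact Finset.sum_comm
    -- diagonal terms
    have hdiag : ∀ n, t n n = v * (((N n).card : ℝ)^2 - (N n).card) := by
      intro n
      have hk : ∀ i ∈ N n, ∀ j ∈ N n, ∑ k ∈ V, q i j k = if i ≠ j then v else 0 := by
        intro i hi j hj
        by_cases h : i = j
        · simp [h, hqdef]
        · have : ∀ k ∈ V, q i j k = 1 := by
            intro k hk
            simp [hqdef, h, hwithin n i hi j hj k hk]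
          rw [Finset.sum_congr rfl this]
          simp [h, hvdef]
      rw [htdef]
      simp only
      rw [Finset.sum_congr rfl fun i hi => Finset.sum_congr rfl (hk i hi)]
      rw [sumIteNe (N n) v]
      ring
    -- cross terms
    have hcr : ∀ n m : Fin M, n ≠ m → u n m ≤ t n m := by
      intro n m hnm
      refine Finset.sum_le_sum fun i hi => Finset.sum_le_sum fun j hj => ?_
      have hij : i ≠ j := by
        intro h
        exact Finset.disjoint_left.mp (hdisj n m hnm) hi (h ▸ hj)
      have hsub : A i ∩ A j ⊆ V := (Finset.inter_subset_left).trans (hA i)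
      have hone : ∀ k ∈ A i ∩ A j, q i j k = 1 := by
        intro k hk
        simp [hqdef, hij, hcross n m hnm i hi j hj k hk]
      calc ((A i ∩ A j).card : ℝ) = ∑ k ∈ A i ∩ A j, q i j k := by
            rw [Finset.sum_congr rfl hone]; simp
        _ ≤ ∑ k ∈ V, q i j k := by
            refine Finset.sum_le_sum_of_subset_of_nonneg hsub fun k _ _ => ?_
            rw [hqdef]; positivity
    -- symmetry of u
    have usym : ∀ n m, u m n = u n m := by
      intro n m
      rw [hudef]
      simp only
      rw [Finset.sum_comm]
      exact Finset.sum_congr rfl fun i _ => Finset.sum_congr rfl fun j _ => by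
        rw [Finset.inter_comm]
    -- split the double sum
    have hsplit : ∀ n : Fin M, ∑ m, t n m
        = t n n + ∑ m ∈ Finset.univ.erase n, t n m :=
      fun n => (Finset.add_sum_erase _ _ (Finset.mem_univ n)).symm
    have herase : ∀ n : Fin M, Finset.univ.erase n
        = Finset.univ.filter (fun m => n < m) ∪ Finset.univ.filter (fun m => m < n) := by
      intro n
      ext m
      simp only [Finset.mem_erase, Finset.mem_union, Finset.mem_filter,
        Finset.mem_univ, true_and, and_true]
      exact ⟨fun h => h.lt_or_gt.symm, fun h => h.elim (fun h => h.ne') fun h => h.ne⟩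
    have hdisj2 : ∀ n : Fin M, Disjoint (Finset.univ.filter (fun m => n < m))
        (Finset.univ.filter (fun m => m < n)) := by
      intro n
      rw [Finset.disjoint_filter]
      intro m _ h1 h2
      exact absurd h1 (not_lt_of_gt (by simpa using h2))
    have hGd2 : ∑ n, t n n + ∑ n, ∑ m ∈ Finset.univ.erase n, t n m = Gd := by
      rw [hGd, ← Finset.sum_add_distrib]
      exact Finset.sum_congr rfl fun n _ => (hsplit n).symm
    have hcrossbound : 2 * ∑ n, ∑ m ∈ Finset.univ.filter (fun m => n < m), u n m
        ≤ ∑ n, ∑ m ∈ Finset.univ.erase n, t n m := by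
      have h1 : ∑ n, ∑ m ∈ Finset.univ.erase n, u n m
          ≤ ∑ n, ∑ m ∈ Finset.univ.erase n, t n m := by
        refine Finset.sum_le_sum fun n _ => Finset.sum_le_sum fun m hm => ?_
        exact hcr n m (Finset.ne_of_mem_erase hm).symm
      have h2 : ∑ n, ∑ m ∈ Finset.univ.erase n, u n m
          = 2 * ∑ n, ∑ m ∈ Finset.univ.filter (fun m => n < m), u n m := by
        have : ∀ n : Fin M, ∑ m ∈ Finset.univ.erase n, u n m
            = ∑ m ∈ Finset.univ.filter (fun m => n < m), u n m
              + ∑ m ∈ Finset.univ.filter (fun m => m < n), u n m := by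
          intro n
          rw [herase n, Finset.sum_union (hdisj2 n)]
        rw [Finset.sum_congr rfl fun n _ => this n, Finset.sum_add_distrib]
        rw [swapSum u]
        rw [Finset.sum_congr rfl fun n _ => Finset.sum_congr rfl fun m _ => usym n m]
        ring
      linarith
    have hdiagsum : ∑ n, t n n = v * ∑ n, (((N n).card : ℝ)^2 - (N n).card) := by
      rw [Finset.mul_sum]
      exact Finset.sum_congr rfl fun n _ => hdiag n
    rw [hgdef]
    rw [← hGd2, hdiagsum]
    have : ∑ n, ∑ m ∈ Finset.univ.filter (fun m => n < m),
        ∑ i ∈ N n, ∑ j ∈ N m, ((A i ∩ A j).card : ℝ)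
        = ∑ n, ∑ m ∈ Finset.univ.filter (fun m => n < m), u n m := rfl
    rw [this]
    linarith
  -- finish
  have key : a + g ≤ s * (s - 1) * v := by linarith
  have h1 : a / (s * (s - 1) * v) + g / (s * (s - 1) * v) ≤ 1 := by
    rw [← add_div]; exact (div_le_one hD).mpr key
  linarith
end
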